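/- Let f(t) = 1/√(2e^t − e^{t/2}) for t ∈ (0,∞). Then ∫₀^∞ f'(t)² √(e^t − e^{t/2}) dt = 3π/32. -/

import Mathlib

/-!
Substitute `x = √(1 - e^{-t/2})`, which maps `(0, ∞)` onto `(0, 1)`. Writing `E = e^{t/2}`, the
integrand becomes `x (4E - 1)² / (16 (2E - 1)³)` and `dt = 4 x E dx`, so with `E = 1 / (1 - x²)` the
integral turns into `¼ ∫₀¹ x² (3 + x²)² / (1 + x²)³ dx`. That rational function has the elementary
primitive `x + (3/2) arctan x - x / (1 + x²)² - 3x / (2 (1 + x²))`, which vanishes at `0` and equals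
`3π/8` at `1`.
-/

open Real MeasureTheory Set Filter Topology

lemma deriv_sq_of_eq_one_div_sqrt {f g : ℝ → ℝ} {g' t : ℝ} (hf : ∀ s, f s = 1 / √(g s))
    (hg : HasDerivAt g g' t) (ht : 0 < g t) :
    deriv f t ^ 2 = g' ^ 2 / (4 * g t ^ 3) := by
  have hs : 0 < √(g t) := sqrt_pos.2 ht
  have hfun : f = fun s => (√(g s))⁻¹ := funext fun s => by rw [hf, one_div]
  rw [hfun, ((hg.sqrt ht.ne').fun_inv hs.ne').deriv]
  calc (-(g' / (2 * √(g t))) / √(g t) ^ 2) ^ 2 = g' ^ 2 / (4 * (√(g t) ^ 2) ^ 3) := by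
        field_simp; ring
    _ = g' ^ 2 / (4 * g t ^ 3) := by rw [sq_sqrt ht.le]

noncomputable def rationalPrimitive (x : ℝ) : ℝ :=
  x + 3 / 2 * arctan x - x / (1 + x ^ 2) ^ 2 - 3 * x / (2 * (1 + x ^ 2))

lemma hasDerivAt_rationalPrimitive (x : ℝ) :
    HasDerivAt rationalPrimitive (x ^ 2 * (3 + x ^ 2) ^ 2 / (1 + x ^ 2) ^ 3) x := by
  have hq : HasDerivAt (fun y : ℝ => 1 + y ^ 2) (2 * x) x := by
    simpa using (hasDerivAt_pow 2 x).const_add 1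
  have hx : 1 + x ^ 2 ≠ 0 := by positivity
  refine ((((hasDerivAt_id' x).fun_add ((hasDerivAt_arctan x).const_mul (3 / 2))).fun_sub
    ((hasDerivAt_id' x).fun_div (hq.fun_pow 2) (pow_ne_zero 2 hx))).fun_sub
    (((hasDerivAt_id' x).const_mul 3).fun_div (hq.const_mul 2) (mul_ne_zero two_ne_zero hx))
    ).congr_deriv ?_
  field_simp
  ring

lemma continuous_rationalPrimitive : Continuous rationalPrimitive :=
  continuous_iff_continuousAt.2 fun x => (hasDerivAt_rationalPrimitive x).continuousAt

lemma rationalPrimitive_zero : rationalPrimitive 0 = 0 := by simp [rationalPrimitive]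

lemma rationalPrimitive_one : rationalPrimitive 1 = 3 * π / 8 := by
  simp only [rationalPrimitive, arctan_one]
  ring

noncomputable def expSubst (t : ℝ) : ℝ := √(1 - exp (-(t / 2)))

lemma continuous_expSubst : Continuous expSubst := by
  unfold expSubst
  fun_prop

lemma expSubst_zero : expSubst 0 = 0 := by simp [expSubst]

lemma sub_exp_neg_half_pos {t : ℝ} (ht : 0 < t) : 0 < 1 - exp (-(t / 2)) := by
  rw [sub_pos, exp_lt_one_iff]
  linarith

lemma expSubst_pos {t : ℝ} (ht : 0 < t) : 0 < expSubst t :=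
  sqrt_pos.2 (sub_exp_neg_half_pos ht)

lemma tendsto_expSubst_atTop : Tendsto expSubst atTop (𝓝 1) := by
  have hexp : Tendsto (fun t : ℝ => exp (-(t / 2))) atTop (𝓝 0) :=
    tendsto_exp_neg_atTop_nhds_zero.comp (tendsto_id.atTop_div_const two_pos)
  unfold expSubst
  simpa using ((tendsto_const_nhds (x := (1 : ℝ))).sub hexp).sqrt

lemma hasDerivAt_expSubst {t : ℝ} (ht : 0 < t) :
    HasDerivAt expSubst (exp (-(t / 2)) / (4 * expSubst t)) t := by
  have hin : HasDerivAt (fun s => 1 - exp (-(s / 2))) (exp (-(t / 2)) / 2) t :=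
    ((((hasDerivAt_id' t).div_const 2).fun_neg.exp).const_sub 1).congr_deriv (by ring)
  refine (hin.sqrt (sub_exp_neg_half_pos ht).ne').congr_deriv ?_
  rw [expSubst]
  ring

lemma deriv_sq_mul_sqrt_eq {f : ℝ → ℝ} (hf : ∀ t, f t = 1 / √(2 * exp t - exp (t / 2))) {t : ℝ}
    (ht : 0 < t) :
    deriv f t ^ 2 * √(exp t - exp (t / 2)) =
      expSubst t ^ 2 * (3 + expSubst t ^ 2) ^ 2 / (1 + expSubst t ^ 2) ^ 3 *
        (exp (-(t / 2)) / (4 * expSubst t)) / 4 := by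
  set E := exp (t / 2) with hE_def
  set x := expSubst t
  have hE : 1 < E := one_lt_exp_iff.2 (by linarith)
  have hexp : exp t = E ^ 2 := by rw [← exp_nat_mul]; ring_nf
  have hneg : exp (-(t / 2)) = E⁻¹ := exp_neg _
  have hx : 0 < x := expSubst_pos ht
  have hx2 : x ^ 2 = 1 - E⁻¹ := by rw [← hneg]; exact sq_sqrt (sub_exp_neg_half_pos ht).le
  have hg : HasDerivAt (fun s => 2 * exp s - exp (s / 2)) (2 * exp t - exp (t / 2) / 2) t :=
    (((hasDerivAt_exp t).const_mul 2).fun_sub ((hasDerivAt_id' t).div_const 2).exp).congr_deriv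
      (by ring)
  have hsqrt : √(exp t - E) = E * x := by
    rw [hexp, show E ^ 2 - E = E ^ 2 * (1 - E⁻¹) by field_simp, sqrt_mul (by positivity),
      sqrt_sq (by positivity), ← hneg]
    rfl
  have hE0 : E ≠ 0 := by positivity
  have h1 : 1 + x ^ 2 = (2 * E - 1) / E := by rw [hx2]; field_simp; ring
  have h3 : 3 + x ^ 2 = (4 * E - 1) / E := by rw [hx2]; field_simp; ring
  rw [deriv_sq_of_eq_one_div_sqrt hf hg (by nlinarith), hsqrt, hneg, ← hE_def, hexp, h1, h3]
  have h2E : 2 * E - 1 ≠ 0 := by linarith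
  field_simp
  ring

theorem stmt_0 (f : ℝ → ℝ)
    (hf : ∀ t : ℝ, f t = 1 / Real.sqrt (2 * Real.exp t - Real.exp (t / 2))) :
    ∫ t in Set.Ioi (0 : ℝ),
      (deriv f t) ^ 2 * Real.sqrt (Real.exp t - Real.exp (t / 2)) = 3 * π / 32 := by
  have hderiv : ∀ t ∈ Ioi (0 : ℝ), HasDerivAt (fun s => rationalPrimitive (expSubst s) / 4)
      (deriv f t ^ 2 * √(exp t - exp (t / 2))) t := by
    intro t ht
    rw [deriv_sq_mul_sqrt_eq hf ht]
    exact ((hasDerivAt_rationalPrimitive _).comp t (hasDerivAt_expSubst ht)).div_const 4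
  have hlim : Tendsto (fun s => rationalPrimitive (expSubst s) / 4) atTop (𝓝 (3 * π / 32)) := by
    have := ((continuous_rationalPrimitive.tendsto 1).comp tendsto_expSubst_atTop).div_const 4
    rwa [rationalPrimitive_one, show 3 * π / 8 / 4 = 3 * π / 32 by ring] at this
  have hcont : ContinuousWithinAt (fun s => rationalPrimitive (expSubst s) / 4) (Ici 0) 0 :=
    ((continuous_rationalPrimitive.comp continuous_expSubst).div_const 4).continuousWithinAt
  rw [integral_Ioi_of_hasDerivAt_of_nonneg hcont hderiv (fun t _ => by positivity) hlim]
  simp [expSubst_zero, rationalPrimitive_zero]
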